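/- arXiv:2011.06931 — 3 statements merged into one kernel-verified Lean document; each statement's English description precedes it below -/
import Mathlib

section
/- Let m be a positive integer, g ∈ {0,1}^m group labels, b a positive integer, ε = 1/b, and let T_1, …, T_m be independent random variables taking values in {0, ε, 2ε, …}. Define the at-risk indicator vector Ȳ(t) ∈ {0,1}^m by Ȳ_j(t) = 1{T_j ≥ t}, the group risk counts Y_g(t) = #{j : g_j = g, T_j ≥ t}, and event counts O_g[t', t] = Y_g(t') − Y_g(t), O[t',t] = O_0[t',t] + O_1[t',t]. Then for every positive integer K, every v, s and every trajectory (ȳ^0, ȳ^ε, …, ȳ^{K−1}) such that the conditioning events have positive probability: P( O_1[K−1,K] = v | O[K−1,K] = s, Ȳ(0) = ȳ^0, Ȳ(ε) = ȳ^ε, …, Ȳ(K−1) = ȳ^{K−1} ) = P( O_1[K−1,K] = v | O[K−1,K] = s, Ȳ(K−1) = ȳ^{K−1} ); i.e., conditionally on the number of events between times K−1 and K, the distribution of the number of treatment-group events depends on the past only through the risk set at time K−1. -/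
/-!
Let `S` be the risk set at grid time `M = (K - 1) b` and let `N = K b`. On the event that the
risk set at `M` is `S`, the event counts in `(M, N]` are functions of the event times
`(T j)_{j ∈ S}` alone, and so is the part of the past trajectory concerning participants in `S`
(it only says `M ≤ T j`); the rest of either conditioning event is a function of
`(T j)_{j ∉ S}`. Since these two families are independent, the factor coming from
`(T j)_{j ∉ S}` cancels from both conditional probabilities.
-/

open MeasureTheory ProbabilityTheory

/-- Number of participants in group `grp` still at risk at grid time `k`:
`Y_grp(k) = #{j : g_j = grp, T_j ≥ k}`. -/
def riskCount {Ω : Type*} {m : ℕ} (g : Fin m → Bool) (T : Fin m → Ω → ℕ)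
    (grp : Bool) (k : ℕ) (ω : Ω) : ℕ :=
  (Finset.univ.filter fun j => g j = grp ∧ k ≤ T j ω).card

/-- Number of events in group `grp` in the time interval `(k, k']`:
`O_grp[k,k'] = Y_grp(k) − Y_grp(k')`. -/
def eventsBetween {Ω : Type*} {m : ℕ} (g : Fin m → Bool) (T : Fin m → Ω → ℕ)
    (grp : Bool) (k k' : ℕ) (ω : Ω) : ℕ :=
  riskCount g T grp k ω - riskCount g T grp k' ω

open Finset

section Independence

variable {Ω β γ : Type*} {mΩ : MeasurableSpace Ω} {μ : Measure Ω} [IsFiniteMeasure μ]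
  [mβ : MeasurableSpace β] [mγ : MeasurableSpace γ] {f : Ω → β} {g : Ω → γ}

theorem ProbabilityTheory.IndepFun.cond_inter_eq_cond (hfg : f ⟂ᵢ[μ] g) (hf : Measurable f)
    (hg : Measurable g) {E F C : Set Ω} (hE : MeasurableSet[mβ.comap f] E)
    (hF : MeasurableSet[mβ.comap f] F) (hC : MeasurableSet[mγ.comap g] C) (hC₀ : μ C ≠ 0) :
    μ[E | F ∩ C] = μ[E | F] := by
  rw [cond_apply ((hf.comap_le _ hF).inter (hg.comap_le _ hC)), cond_apply (hf.comap_le _ hF),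
    Set.inter_right_comm, hfg.meas_inter hF hC, hfg.meas_inter (hF.inter hE) hC,
    ← ENNReal.div_eq_inv_mul, ← ENNReal.div_eq_inv_mul,
    ENNReal.mul_div_mul_right _ _ hC₀ (measure_ne_top μ C)]

end Independence

section DeterminedBy

variable {Ω ι β : Type*} {X : ι → Ω → β} {S : Finset ι} {P Q : Set Ω}

def DeterminedBy (X : ι → Ω → β) (S : Finset ι) (P : Set Ω) : Prop :=
  ∀ ω ω', (∀ j ∈ S, X j ω = X j ω') → ω ∈ P → ω' ∈ P

theorem DeterminedBy.inter (hP : DeterminedBy X S P) (hQ : DeterminedBy X S Q) :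
    DeterminedBy X S (P ∩ Q) :=
  fun ω ω' h hω => ⟨hP ω ω' h hω.1, hQ ω ω' h hω.2⟩

theorem determinedBy_setOf_forall_mem (p : ι → β → Prop) :
    DeterminedBy X S {ω | ∀ j ∈ S, p j (X j ω)} :=
  fun _ _ h hω j hj => h j hj ▸ hω j hj

theorem DeterminedBy.measurableSet_comap [MeasurableSpace β] [Countable β]
    [MeasurableSingletonClass β] (hP : DeterminedBy X S P) :
    MeasurableSet[MeasurableSpace.comap (fun ω (j : S) => X j ω) inferInstance] P := by
  refine ⟨(fun ω (j : S) => X j ω) '' P, (Set.to_countable _).measurableSet, ?_⟩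
  ext ω
  exact ⟨fun ⟨ω', hω', h⟩ => hP ω' ω (fun j hj => congrFun h ⟨j, hj⟩) hω',
    fun hω => ⟨ω, hω, rfl⟩⟩

end DeterminedBy

section Counting

variable {Ω : Type*} {m : ℕ} (g : Fin m → Bool) (T : Fin m → Ω → ℕ)

def eventsAmong (S : Finset (Fin m)) (grp : Bool) (N : ℕ) (ω : Ω) : ℕ :=
  #{j ∈ S | g j = grp ∧ T j ω < N}

variable {g T}

theorem eventsAmong_congr {S : Finset (Fin m)} {ω ω' : Ω} (h : ∀ j ∈ S, T j ω = T j ω')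
    (grp : Bool) (N : ℕ) : eventsAmong g T S grp N ω = eventsAmong g T S grp N ω' :=
  congrArg card <| filter_congr fun j hj => by rw [h j hj]

theorem determinedBy_setOf_eventsAmong {S : Finset (Fin m)} (N : ℕ) (p : ℕ → ℕ → Prop) :
    DeterminedBy T S {ω | p (eventsAmong g T S false N ω) (eventsAmong g T S true N ω)} :=
  fun _ _ h hω => by simpa only [Set.mem_ofPred_eq, eventsAmong_congr h] using hω

theorem eventsBetween_eq_eventsAmong {S : Finset (Fin m)} {M N : ℕ} {ω : Ω} (hMN : M ≤ N)
    (hS : ∀ j, M ≤ T j ω ↔ j ∈ S) (grp : Bool) :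
    eventsBetween g T grp M N ω = eventsAmong g T S grp N ω := by
  have hM : riskCount g T grp M ω = #{j ∈ S | g j = grp} := by
    refine congrArg card (ext fun j => ?_)
    simp only [mem_filter, mem_univ, true_and, ← hS, and_comm]
  have hN : riskCount g T grp N ω = #{j ∈ S | g j = grp ∧ ¬ T j ω < N} := by
    refine congrArg card (ext fun j => ?_)
    simp only [mem_filter, mem_univ, true_and, not_lt, ← hS]
    exact ⟨fun ⟨hg, hj⟩ => ⟨hMN.trans hj, hg, hj⟩, fun ⟨_, hg, hj⟩ => ⟨hg, hj⟩⟩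
  have hsplit := card_filter_add_card_filter_not (s := {j ∈ S | g j = grp})
    (p := fun j => T j ω < N)
  rw [filter_filter, filter_filter] at hsplit
  rw [eventsBetween, eventsAmong, hM, hN, ← hsplit, Nat.add_sub_cancel]

end Counting

section Trajectory

variable {Ω ι : Type*} [Fintype ι] [DecidableEq ι] {T : ι → Ω → ℕ}

theorem setOf_riskSet_eq_inter (M : ℕ) (r : ι → Bool) :
    {ω | ∀ j, decide (M ≤ T j ω) = r j}
      = {ω | ∀ j ∈ ({j | r j = true} : Finset ι), M ≤ T j ω}
        ∩ {ω | ∀ j ∈ ({j | r j = true} : Finset ι)ᶜ, T j ω < M} := by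
  ext ω
  simp only [Set.mem_ofPred_eq, Set.mem_inter_iff, mem_compl, mem_filter, mem_univ, true_and,
    ← forall_and]
  exact forall_congr' fun j => by cases r j <;> simp

theorem setOf_trajectory_eq_inter {M : ℕ} {ybar : ℕ → ι → Bool} {ω₀ : Ω}
    (hω₀ : ∀ k ≤ M, ∀ j, decide (k ≤ T j ω₀) = ybar k j) :
    {ω | ∀ k ≤ M, ∀ j, decide (k ≤ T j ω) = ybar k j}
      = {ω | ∀ j ∈ ({j | ybar M j = true} : Finset ι), M ≤ T j ω}
        ∩ {ω | ∀ j ∈ ({j | ybar M j = true} : Finset ι)ᶜ, ∀ k ≤ M,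
            decide (k ≤ T j ω) = ybar k j} := by
  have hmem : ∀ j, j ∈ ({j | ybar M j = true} : Finset ι) ↔ ybar M j = true := by simp
  ext ω
  refine ⟨fun h => ⟨fun j hj => of_decide_eq_true ((h M le_rfl j).trans ((hmem j).1 hj)),
    fun j _ k hk => h k hk j⟩, ?_⟩
  rintro ⟨hS, hSc⟩ k hk j
  by_cases hj : ybar M j = true
  · -- the trajectory of `ω₀` shows that `ybar k j = true` for `k ≤ M`
    have hM₀ : M ≤ T j ω₀ := of_decide_eq_true ((hω₀ M le_rfl j).trans hj)
    rw [← hω₀ k hk j, decide_eq_true (hk.trans hM₀),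
      decide_eq_true (hk.trans (hS j ((hmem j).2 hj)))]
  · exact hSc j (mem_compl.2 (mt (hmem j).1 hj)) k hk

end Trajectory

section RiskSet

variable {Ω : Type*} [MeasurableSpace Ω] {μ : Measure Ω} [IsFiniteMeasure μ] {m : ℕ}
  {g : Fin m → Bool} {T : Fin m → Ω → ℕ}

theorem cond_eventsBetween_eq_cond_eventsAmong (hTmeas : ∀ j, Measurable (T j))
    (hTindep : iIndepFun T μ) {M N : ℕ} (hMN : M ≤ N) (S : Finset (Fin m)) {C : Set Ω}
    (hC : DeterminedBy T Sᶜ C) (hCS : ∀ ω ∈ C, ∀ j ∉ S, T j ω < M) (v s : ℕ)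
    (hpos : μ ({ω | eventsBetween g T false M N ω + eventsBetween g T true M N ω = s}
      ∩ ({ω | ∀ j ∈ S, M ≤ T j ω} ∩ C)) ≠ 0) :
    μ[{ω | eventsBetween g T true M N ω = v} |
        {ω | eventsBetween g T false M N ω + eventsBetween g T true M N ω = s}
          ∩ ({ω | ∀ j ∈ S, M ≤ T j ω} ∩ C)]
      = μ[{ω | eventsAmong g T S true N ω = v} |
        {ω | eventsAmong g T S false N ω + eventsAmong g T S true N ω = s}
          ∩ {ω | ∀ j ∈ S, M ≤ T j ω}] := by
  set R := {ω | ∀ j ∈ S, M ≤ T j ω}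
  set F := {ω | eventsAmong g T S false N ω + eventsAmong g T S true N ω = s} ∩ R
  have hO : ∀ ω ∈ R ∩ C, ∀ grp,
      eventsBetween g T grp M N ω = eventsAmong g T S grp N ω :=
    fun ω hω => eventsBetween_eq_eventsAmong hMN fun j =>
      ⟨fun hj => by_contra fun hjS => (hCS ω hω.2 j hjS).not_ge hj, hω.1 j⟩
  have hcond : {ω | eventsBetween g T false M N ω + eventsBetween g T true M N ω = s}
      ∩ (R ∩ C) = F ∩ C := by
    ext ω
    constructor
    · rintro ⟨hs, hω⟩
      exact ⟨⟨by rwa [Set.mem_ofPred_eq, hO ω hω, hO ω hω] at hs, hω.1⟩, hω.2⟩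
    · rintro ⟨⟨hs, hR⟩, hCω⟩
      exact ⟨by rwa [Set.mem_ofPred_eq, hO ω ⟨hR, hCω⟩, hO ω ⟨hR, hCω⟩], hR, hCω⟩
  have htarget : F ∩ C ∩ {ω | eventsBetween g T true M N ω = v}
      = F ∩ C ∩ {ω | eventsAmong g T S true N ω = v} := by
    ext ω
    simp only [Set.mem_inter_iff, Set.mem_ofPred_eq]
    exact and_congr_right fun hω => by rw [hO ω ⟨hω.1.2, hω.2⟩]
  have hX : Measurable fun ω (j : S) => T j ω := measurable_pi_lambda _ fun j => hTmeas j
  have hY : Measurable fun ω (j : ↥Sᶜ) => T j ω := measurable_pi_lambda _ fun j => hTmeas j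
  have hE : DeterminedBy T S {ω | eventsAmong g T S true N ω = v} :=
    determinedBy_setOf_eventsAmong N fun _ a => a = v
  have hF : DeterminedBy T S F :=
    (determinedBy_setOf_eventsAmong N fun a b => a + b = s).inter
      (determinedBy_setOf_forall_mem _)
  have hFC : MeasurableSet (F ∩ C) :=
    (hX.comap_le _ hF.measurableSet_comap).inter (hY.comap_le _ hC.measurableSet_comap)
  rw [hcond] at hpos ⊢
  rw [← cond_inter_self hFC, htarget, cond_inter_self hFC]
  exact (hTindep.indepFun_finset S Sᶜ disjoint_compl_right hTmeas).cond_inter_eq_cond hX hY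
    hE.measurableSet_comap hF.measurableSet_comap hC.measurableSet_comap
    (measure_mono_null Set.inter_subset_right |>.mt hpos)

end RiskSet

theorem conditional_treatment_events_depend_only_on_current_risk_set_general
    {Ω : Type*} [MeasurableSpace Ω] (μ : Measure Ω) [IsProbabilityMeasure μ]
    (m b : ℕ) (g : Fin m → Bool) (T : Fin m → Ω → ℕ)
    (hTmeas : ∀ j, Measurable (T j))
    (hTindep : iIndepFun T μ)
    (K : ℕ) (v s : ℕ) (ybar : ℕ → Fin m → Bool)
    (hpos1 : 0 < μ ({ω | eventsBetween g T false ((K - 1) * b) (K * b) ω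
                        + eventsBetween g T true ((K - 1) * b) (K * b) ω = s}
        ∩ {ω | ∀ k ≤ (K - 1) * b, ∀ j, decide (k ≤ T j ω) = ybar k j}))
    (hpos2 : 0 < μ ({ω | eventsBetween g T false ((K - 1) * b) (K * b) ω
                        + eventsBetween g T true ((K - 1) * b) (K * b) ω = s}
        ∩ {ω | ∀ j, decide ((K - 1) * b ≤ T j ω) = ybar ((K - 1) * b) j})) :
    ProbabilityTheory.cond μ
        ({ω | eventsBetween g T false ((K - 1) * b) (K * b) ω
              + eventsBetween g T true ((K - 1) * b) (K * b) ω = s}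
          ∩ {ω | ∀ k ≤ (K - 1) * b, ∀ j, decide (k ≤ T j ω) = ybar k j})
        {ω | eventsBetween g T true ((K - 1) * b) (K * b) ω = v}
      = ProbabilityTheory.cond μ
        ({ω | eventsBetween g T false ((K - 1) * b) (K * b) ω
              + eventsBetween g T true ((K - 1) * b) (K * b) ω = s}
          ∩ {ω | ∀ j, decide ((K - 1) * b ≤ T j ω) = ybar ((K - 1) * b) j})
        {ω | eventsBetween g T true ((K - 1) * b) (K * b) ω = v} := by
  set M := (K - 1) * b
  have hMN : M ≤ K * b := Nat.mul_le_mul_right b (Nat.sub_le K 1)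
  obtain ⟨ω₀, -, hω₀⟩ := nonempty_of_measure_ne_zero hpos1.ne'
  rw [setOf_trajectory_eq_inter hω₀] at hpos1 ⊢
  rw [setOf_riskSet_eq_inter] at hpos2 ⊢
  rw [cond_eventsBetween_eq_cond_eventsAmong hTmeas hTindep hMN _
      (determinedBy_setOf_forall_mem fun j t => ∀ k ≤ M, decide (k ≤ t) = ybar k j)
      (fun ω hω j hj => not_le.mp <| of_decide_eq_false <|
        (hω j (mem_compl.2 hj) M le_rfl).trans (by simpa using hj)) v s hpos1.ne',
    cond_eventsBetween_eq_cond_eventsAmong hTmeas hTindep hMN _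
      (determinedBy_setOf_forall_mem fun _ t => t < M)
      (fun ω hω j hj => hω j (mem_compl.2 hj)) v s hpos2.ne']

/-- Conditional independence of the past given the current risk set (first part of
Theorem A.1): for independent event times `T_1, …, T_m` on the ε-grid (`ε = 1/b`, grid
index `k` corresponding to time `k·ε`), conditionally on the number of events `s` between
times `K−1` and `K`, the probability that `v` of them fall in the treatment group is the
same whether one conditions on the whole at-risk trajectory `Ȳ(0), Ȳ(ε), …, Ȳ(K−1)` or
only on the risk set `Ȳ(K−1)` at time `K−1` (provided both conditioning events have
positive probability). -/
theorem conditional_treatment_events_depend_only_on_current_risk_set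
    {Ω : Type*} [MeasurableSpace Ω] (μ : Measure Ω) [IsProbabilityMeasure μ]
    (m b : ℕ) (hb : 0 < b) (g : Fin m → Bool) (T : Fin m → Ω → ℕ)
    (hTmeas : ∀ j, Measurable (T j))
    (hTindep : iIndepFun T μ)
    (K : ℕ) (hK : 1 ≤ K) (v s : ℕ) (ybar : ℕ → Fin m → Bool)
    (hpos1 : 0 < μ ({ω | eventsBetween g T false ((K - 1) * b) (K * b) ω
                        + eventsBetween g T true ((K - 1) * b) (K * b) ω = s}
        ∩ {ω | ∀ k ≤ (K - 1) * b, ∀ j, decide (k ≤ T j ω) = ybar k j}))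
    (hpos2 : 0 < μ ({ω | eventsBetween g T false ((K - 1) * b) (K * b) ω
                        + eventsBetween g T true ((K - 1) * b) (K * b) ω = s}
        ∩ {ω | ∀ j, decide ((K - 1) * b ≤ T j ω) = ybar ((K - 1) * b) j})) :
    ProbabilityTheory.cond μ
        ({ω | eventsBetween g T false ((K - 1) * b) (K * b) ω
              + eventsBetween g T true ((K - 1) * b) (K * b) ω = s}
          ∩ {ω | ∀ k ≤ (K - 1) * b, ∀ j, decide (k ≤ T j ω) = ybar k j})
        {ω | eventsBetween g T true ((K - 1) * b) (K * b) ω = v}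
      = ProbabilityTheory.cond μ
        ({ω | eventsBetween g T false ((K - 1) * b) (K * b) ω
              + eventsBetween g T true ((K - 1) * b) (K * b) ω = s}
          ∩ {ω | ∀ j, decide ((K - 1) * b ≤ T j ω) = ybar ((K - 1) * b) j})
        {ω | eventsBetween g T true ((K - 1) * b) (K * b) ω = v} :=
  conditional_treatment_events_depend_only_on_current_risk_set_general μ m b g T hTmeas hTindep K v
    s ybar hpos1 hpos2
end

section
/- Let y0, y1 be positive integers and for θ > 0 set p_θ = y1·θ/(y0 + y1·θ). Fix θ0 > 0 and θmin with 0 < θmin < θ0, and define the conditional growth rate g(θ1, θ) = p_θ · log(p_{θ1}/p_{θ0}) + (1 − p_θ) · log((1 − p_{θ1})/(1 − p_{θ0})) for θ1 > 0 and θ > 0. Then: (i) inf_{0 < θ ≤ θmin} g(θmin, θ) = g(θmin, θmin) = KL(Bernoulli(p_{θmin}) ‖ Bernoulli(p_{θ0})) > 0; and (ii) for every θ1 > 0 with θ1 ≠ θmin, inf_{0 < θ ≤ θmin} g(θ1, θ) < g(θmin, θmin). Hence θ1 = θmin is the unique maximizer of θ1 ↦ inf_{0 < θ ≤ θmin} g(θ1,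 θ); i.e., the single-event E-variable q_{θmin}/q_{θ0} is growth-rate optimal in the worst case (GROW) for the one-sided alternative {θ : 0 < θ ≤ θmin}. -/
/-- The probability that a single event falls in the treatment group under hazard ratio
`θ`: `p_θ = y1·θ/(y0 + y1·θ)`. -/
noncomputable def pTreat (y0 y1 θ : ℝ) : ℝ := y1 * θ / (y0 + y1 * θ)

/-- Conditional growth rate of the single-event likelihood ratio `q_{θ1}/q_{θ0}` when the
observation is Bernoulli(`p_θ`):
`g(θ1, θ) = p_θ·log(p_{θ1}/p_{θ0}) + (1 − p_θ)·log((1 − p_{θ1})/(1 − p_{θ0}))`. -/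
noncomputable def growthRate (y0 y1 θ0 θ1 θ : ℝ) : ℝ :=
  pTreat y0 y1 θ * Real.log (pTreat y0 y1 θ1 / pTreat y0 y1 θ0) +
    (1 - pTreat y0 y1 θ) * Real.log ((1 - pTreat y0 y1 θ1) / (1 - pTreat y0 y1 θ0))

lemma pTreat_pos {y0 y1 θ : ℝ} (h0 : 0 < y0) (h1 : 0 < y1) (hθ : 0 < θ) :
    0 < pTreat y0 y1 θ := by
  unfold pTreat; positivity

lemma pTreat_lt_one {y0 y1 θ : ℝ} (h0 : 0 < y0) (h1 : 0 < y1) (hθ : 0 < θ) :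
    pTreat y0 y1 θ < 1 := by
  unfold pTreat
  rw [div_lt_one (by positivity)]
  linarith

lemma pTreat_lt {y0 y1 θ θ' : ℝ} (h0 : 0 < y0) (h1 : 0 < y1) (hθ : 0 < θ)
    (hlt : θ < θ') : pTreat y0 y1 θ < pTreat y0 y1 θ' := by
  have hθ' : 0 < θ' := lt_trans hθ hlt
  unfold pTreat
  rw [div_lt_div_iff₀ (by positivity) (by positivity)]
  nlinarith [mul_pos (mul_pos h1 h0) (sub_pos.2 hlt)]

lemma pTreat_le {y0 y1 θ θ' : ℝ} (h0 : 0 < y0) (h1 : 0 < y1) (hθ : 0 < θ)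
    (hle : θ ≤ θ') : pTreat y0 y1 θ ≤ pTreat y0 y1 θ' := by
  rcases eq_or_lt_of_le hle with h | h
  · rw [h]
  · exact le_of_lt (pTreat_lt h0 h1 hθ h)

/-- Positivity of KL divergence between distinct Bernoulli distributions. -/
lemma kl_pos {p q : ℝ} (hp : 0 < p) (hp1 : p < 1) (hq : 0 < q) (hq1 : q < 1)
    (hne : p ≠ q) :
    0 < p * Real.log (p / q) + (1 - p) * Real.log ((1 - p) / (1 - q)) := by
  have h1 : Real.log (q / p) < q / p - 1 :=
    Real.log_lt_sub_one_of_pos (by positivity) (by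
      intro h
      exact hne (by field_simp at h; linarith))
  have h2 : Real.log ((1 - q) / (1 - p)) < (1 - q) / (1 - p) - 1 :=
    Real.log_lt_sub_one_of_pos (by
      apply div_pos <;> linarith) (by
      intro h
      rw [div_eq_one_iff_eq (by linarith)] at h
      exact hne (by linarith))
  have e1 : Real.log (p / q) = - Real.log (q / p) := by
    rw [Real.log_div hp.ne' hq.ne', Real.log_div hq.ne' hp.ne']; ring
  have e2 : Real.log ((1 - p) / (1 - q)) = - Real.log ((1 - q) / (1 - p)) := by
    rw [Real.log_div (by linarith) (by linarith), Real.log_div (by linarith) (by linarith)]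
    ring
  rw [e1, e2]
  have hpq : p * (q / p) = q := by field_simp
  have hpq2 : (1 - p) * ((1 - q) / (1 - p)) = 1 - q := by
    rw [mul_comm, div_mul_cancel₀ _ (by linarith : (1:ℝ) - p ≠ 0)]
  nlinarith [mul_lt_mul_of_pos_left h1 hp, mul_lt_mul_of_pos_left h2 (by linarith : (0:ℝ) < 1 - p)]

/-- GROW optimality of `θ1 = θmin` for the one-sided alternative `{θ : 0 < θ ≤ θmin}`:
(i) the worst-case growth rate of `q_{θmin}/q_{θ0}` is attained at `θ = θmin` and equals
the Kullback–Leibler divergence `KL(Bernoulli(p_{θmin}) ‖ Bernoulli(p_{θ0})) > 0`;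
(ii) for every `θ1 > 0` with `θ1 ≠ θmin` the worst-case growth rate is strictly smaller;
hence `θ1 = θmin` is the unique maximizer of the worst-case growth rate. -/
theorem grow_optimality_single_event
    (y0 y1 : ℕ) (hy0 : 1 ≤ y0) (hy1 : 1 ≤ y1)
    (θ0 θmin : ℝ) (hθ0 : 0 < θ0) (hmin0 : 0 < θmin) (hminlt : θmin < θ0) :
    sInf ((fun θ => growthRate (y0 : ℝ) (y1 : ℝ) θ0 θmin θ) '' Set.Ioc (0 : ℝ) θmin)
        = growthRate (y0 : ℝ) (y1 : ℝ) θ0 θmin θmin ∧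
    growthRate (y0 : ℝ) (y1 : ℝ) θ0 θmin θmin
        = pTreat (y0 : ℝ) (y1 : ℝ) θmin
              * Real.log (pTreat (y0 : ℝ) (y1 : ℝ) θmin / pTreat (y0 : ℝ) (y1 : ℝ) θ0)
          + (1 - pTreat (y0 : ℝ) (y1 : ℝ) θmin)
              * Real.log ((1 - pTreat (y0 : ℝ) (y1 : ℝ) θmin)
                  / (1 - pTreat (y0 : ℝ) (y1 : ℝ) θ0)) ∧
    0 < growthRate (y0 : ℝ) (y1 : ℝ) θ0 θmin θmin ∧
    ∀ θ1 : ℝ, 0 < θ1 → θ1 ≠ θmin →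
      sInf ((fun θ => growthRate (y0 : ℝ) (y1 : ℝ) θ0 θ1 θ) '' Set.Ioc (0 : ℝ) θmin)
        < growthRate (y0 : ℝ) (y1 : ℝ) θ0 θmin θmin := by
  have h0 : (0 : ℝ) < y0 := by
    have : (1 : ℝ) ≤ y0 := by exact_mod_cast hy0
    linarith
  have h1 : (0 : ℝ) < y1 := by
    have : (1 : ℝ) ≤ y1 := by exact_mod_cast hy1
    linarith
  set Pm := pTreat (y0 : ℝ) (y1 : ℝ) θmin with hPmdef
  set P0 := pTreat (y0 : ℝ) (y1 : ℝ) θ0 with hP0def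
  have hPm : 0 < Pm := pTreat_pos h0 h1 hmin0
  have hPm1 : Pm < 1 := pTreat_lt_one h0 h1 hmin0
  have hP0 : 0 < P0 := pTreat_pos h0 h1 hθ0
  have hP01 : P0 < 1 := pTreat_lt_one h0 h1 hθ0
  have hPmP0 : Pm < P0 := pTreat_lt h0 h1 hmin0 hminlt
  -- KL positivity
  have hKL : 0 < growthRate (y0 : ℝ) (y1 : ℝ) θ0 θmin θmin := by
    show 0 < Pm * Real.log (Pm / P0) + (1 - Pm) * Real.log ((1 - Pm) / (1 - P0))
    exact kl_pos hPm hPm1 hP0 hP01 (ne_of_lt hPmP0)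
  -- signs of the two log terms (for θ1 = θmin)
  have ha : Real.log (Pm / P0) < 0 :=
    Real.log_neg (by positivity) ((div_lt_one hP0).2 hPmP0)
  have hb : 0 < Real.log ((1 - Pm) / (1 - P0)) :=
    Real.log_pos ((one_lt_div (by linarith)).2 (by linarith))
  -- (i): the infimum over (0, θmin] of g(θmin, ·) is attained at θmin
  have hmem : growthRate (y0 : ℝ) (y1 : ℝ) θ0 θmin θmin ∈
      (fun θ => growthRate (y0 : ℝ) (y1 : ℝ) θ0 θmin θ) '' Set.Ioc (0 : ℝ) θmin :=
    ⟨θmin, ⟨hmin0, le_refl _⟩, rfl⟩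
  have hlb : ∀ x ∈ (fun θ => growthRate (y0 : ℝ) (y1 : ℝ) θ0 θmin θ) '' Set.Ioc (0 : ℝ) θmin,
      growthRate (y0 : ℝ) (y1 : ℝ) θ0 θmin θmin ≤ x := by
    rintro x ⟨θ, ⟨hθpos, hθle⟩, rfl⟩
    have hple : pTreat (y0 : ℝ) (y1 : ℝ) θ ≤ Pm := pTreat_le h0 h1 hθpos hθle
    show Pm * Real.log (Pm / P0) + (1 - Pm) * Real.log ((1 - Pm) / (1 - P0)) ≤
      pTreat (y0 : ℝ) (y1 : ℝ) θ * Real.log (Pm / P0) +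
        (1 - pTreat (y0 : ℝ) (y1 : ℝ) θ) * Real.log ((1 - Pm) / (1 - P0))
    nlinarith
  have hinf : sInf ((fun θ => growthRate (y0 : ℝ) (y1 : ℝ) θ0 θmin θ) '' Set.Ioc (0 : ℝ) θmin)
      = growthRate (y0 : ℝ) (y1 : ℝ) θ0 θmin θmin :=
    IsLeast.csInf_eq ⟨hmem, hlb⟩
  refine ⟨hinf, rfl, hKL, ?_⟩
  -- (ii): strict suboptimality of any θ1 ≠ θmin
  intro θ1 hθ1 hne
  set P1 := pTreat (y0 : ℝ) (y1 : ℝ) θ1 with hP1def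
  have hP1 : 0 < P1 := pTreat_pos h0 h1 hθ1
  have hP11 : P1 < 1 := pTreat_lt_one h0 h1 hθ1
  have hP1Pm : P1 ≠ Pm := by
    rcases lt_or_gt_of_ne hne with h | h
    · exact ne_of_lt (pTreat_lt h0 h1 hθ1 h)
    · exact ne_of_gt (pTreat_lt h0 h1 hmin0 h)
  -- the image set is bounded below by min A B
  have hbdd : BddBelow ((fun θ => growthRate (y0 : ℝ) (y1 : ℝ) θ0 θ1 θ) '' Set.Ioc (0 : ℝ) θmin) := by
    refine ⟨min (Real.log (P1 / P0)) (Real.log ((1 - P1) / (1 - P0))), ?_⟩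
    rintro x ⟨θ, ⟨hθpos, hθle⟩, rfl⟩
    have hp : 0 < pTreat (y0 : ℝ) (y1 : ℝ) θ := pTreat_pos h0 h1 hθpos
    have hp1 : pTreat (y0 : ℝ) (y1 : ℝ) θ < 1 := pTreat_lt_one h0 h1 hθpos
    show min (Real.log (P1 / P0)) (Real.log ((1 - P1) / (1 - P0))) ≤
      pTreat (y0 : ℝ) (y1 : ℝ) θ * Real.log (P1 / P0) +
        (1 - pTreat (y0 : ℝ) (y1 : ℝ) θ) * Real.log ((1 - P1) / (1 - P0))
    rcases le_total (Real.log (P1 / P0)) (Real.log ((1 - P1) / (1 - P0))) with h | h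
    · rw [min_eq_left h]; nlinarith
    · rw [min_eq_right h]; nlinarith
  have hmem1 : growthRate (y0 : ℝ) (y1 : ℝ) θ0 θ1 θmin ∈
      (fun θ => growthRate (y0 : ℝ) (y1 : ℝ) θ0 θ1 θ) '' Set.Ioc (0 : ℝ) θmin :=
    ⟨θmin, ⟨hmin0, le_refl _⟩, rfl⟩
  have hle : sInf ((fun θ => growthRate (y0 : ℝ) (y1 : ℝ) θ0 θ1 θ) '' Set.Ioc (0 : ℝ) θmin)
      ≤ growthRate (y0 : ℝ) (y1 : ℝ) θ0 θ1 θmin := csInf_le hbdd hmem1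
  -- key identity: g(θmin,θmin) - g(θ1,θmin) = KL(Pm ‖ P1) > 0
  have hkey : growthRate (y0 : ℝ) (y1 : ℝ) θ0 θmin θmin
      - growthRate (y0 : ℝ) (y1 : ℝ) θ0 θ1 θmin
      = Pm * Real.log (Pm / P1) + (1 - Pm) * Real.log ((1 - Pm) / (1 - P1)) := by
    show Pm * Real.log (Pm / P0) + (1 - Pm) * Real.log ((1 - Pm) / (1 - P0))
        - (Pm * Real.log (P1 / P0) + (1 - Pm) * Real.log ((1 - P1) / (1 - P0))) = _
    rw [Real.log_div hPm.ne' hP0.ne', Real.log_div hP1.ne' hP0.ne',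
      Real.log_div (by linarith : (1:ℝ) - Pm ≠ 0) (by linarith : (1:ℝ) - P0 ≠ 0),
      Real.log_div (by linarith : (1:ℝ) - P1 ≠ 0) (by linarith : (1:ℝ) - P0 ≠ 0),
      Real.log_div hPm.ne' hP1.ne',
      Real.log_div (by linarith : (1:ℝ) - Pm ≠ 0) (by linarith : (1:ℝ) - P1 ≠ 0)]
    ring
  have hklp : 0 < Pm * Real.log (Pm / P1) + (1 - Pm) * Real.log ((1 - Pm) / (1 - P1)) :=
    kl_pos hPm hPm1 hP1 hP11 (Ne.symm hP1Pm)
  linarith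
end

section
/- Consider the discrete-time risk set process with initial risk sets Y_1⟨1⟩ = m1 ≥ 1, Y_0⟨1⟩ = m0 ≥ 1, in which at each event time i, conditionally on the past, the indicator O_1⟨i⟩ of a treatment-group event is Bernoulli( Y_1⟨i⟩·θ0 / (Y_0⟨i⟩ + Y_1⟨i⟩·θ0) ), and the risk sets update by Y_1⟨i+1⟩ = Y_1⟨i⟩ − O_1⟨i⟩, Y_0⟨i+1⟩ = Y_0⟨i⟩ − (1 − O_1⟨i⟩). Then for every θ1 > 0 the logrank likelihood-ratio process M_{θ1,θ0}^{⟨n⟩} = ∏_{i=1}^n q_{θ1}(O_1⟨i⟩ | (Y_0⟨i⟩, Y_1⟨i⟩)) / q_{θ0}(O_1⟨i⟩ | (Y_0⟨i⟩, Y_1⟨i⟩)) is a nonnegative martingale with respect to the natural filtration of the process under the null distribution P_{θ0}, with E_{P_{θ0}}[M_{θ1,θ0}^{⟨n⟩}] = 1 for every n for which the risk sets remain nonempty; consequently, for every 0 < α ≤ 1, P_{θ0}( there exists n with M_{θ1,θ0}^{⟨n⟩} ≥ 1/α ) ≤ α. -/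
/-
Given the past, the risk sets at event `i` are known and `O1⟨i⟩` is Bernoulli with parameter
`q_{θ0}(1 | Y⟨i⟩)`, so the `i`-th factor of the likelihood ratio has conditional mean
`∑_o q_{θ1}(o | Y⟨i⟩) / q_{θ0}(o | Y⟨i⟩) · q_{θ0}(o | Y⟨i⟩) = ∑_o q_{θ1}(o | Y⟨i⟩) = 1`,
provided the risk sets are not both empty; they lose at most one participant per event, so this
holds up to event `m0 + m1`. The factors are bounded by `1 + θ1/θ0 + θ0/θ1`, so the product
stopped at `m0 + m1` is a martingale, and Ville's inequality is Doob's maximal inequality for it.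
-/

open MeasureTheory

/-- The single-event conditional probability mass function
`q_θ(o | (y0,y1)) = (y1·θ/(y0 + y1·θ))^o · (y0/(y0 + y1·θ))^(1−o)` on `{0,1}`. -/
noncomputable def qSingle (θ : ℝ) (y0 y1 : ℕ) (o : ℕ) : ℝ :=
  ((y1 : ℝ) * θ / ((y0 : ℝ) + (y1 : ℝ) * θ)) ^ o *
    ((y0 : ℝ) / ((y0 : ℝ) + (y1 : ℝ) * θ)) ^ (1 - o)

/-- The logrank likelihood-ratio process
`M_{θ1,θ0}⟨n⟩ = ∏_{i=1}^n q_{θ1}(O1⟨i⟩ | (Y0⟨i⟩,Y1⟨i⟩)) / q_{θ0}(O1⟨i⟩ | (Y0⟨i⟩,Y1⟨i⟩))`. -/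
noncomputable def logrankLR (θ0 θ1 : ℝ) {Ω : Type*}
    (O1 Y0 Y1 : ℕ → Ω → ℕ) (n : ℕ) (ω : Ω) : ℝ :=
  ∏ i ∈ Finset.Icc 1 n,
    qSingle θ1 (Y0 i ω) (Y1 i ω) (O1 i ω) / qSingle θ0 (Y0 i ω) (Y1 i ω) (O1 i ω)

open Finset

noncomputable def qRatio (θ0 θ1 : ℝ) (y0 y1 o : ℕ) : ℝ :=
  qSingle θ1 y0 y1 o / qSingle θ0 y0 y1 o

section Algebra

variable {θ θ0 θ1 : ℝ} {y0 y1 o : ℕ}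

@[simp] lemma qSingle_zero : qSingle θ y0 y1 0 = y0 / (y0 + y1 * θ) := by
  simp [qSingle]

@[simp] lemma qSingle_one : qSingle θ y0 y1 1 = y1 * θ / (y0 + y1 * θ) := by
  simp [qSingle]

lemma qSingle_nonneg (hθ : 0 ≤ θ) : 0 ≤ qSingle θ y0 y1 o := by
  unfold qSingle; positivity

lemma qSingle_zero_add_qSingle_one (hθ : 0 < θ) (hy : 1 ≤ y0 + y1) :
    qSingle θ y0 y1 0 + qSingle θ y0 y1 1 = 1 := by
  have : (0 : ℝ) < y0 + y1 * θ := by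
    rcases Nat.eq_zero_or_pos y1 with h | h
    · subst h; simpa [Nat.lt_iff_add_one_le] using hy
    · positivity
  rw [qSingle_zero, qSingle_one, ← add_div, div_self this.ne']

lemma qRatio_nonneg (hθ0 : 0 ≤ θ0) (hθ1 : 0 ≤ θ1) : 0 ≤ qRatio θ0 θ1 y0 y1 o :=
  div_nonneg (qSingle_nonneg hθ1) (qSingle_nonneg hθ0)

lemma qRatio_mul_qSingle (hθ0 : 0 < θ0) (ho : o ≤ 1) :
    qRatio θ0 θ1 y0 y1 o * qSingle θ0 y0 y1 o = qSingle θ1 y0 y1 o := by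
  by_cases h : qSingle θ0 y0 y1 o = 0
  · have hy0 : (0 : ℝ) ≤ y0 := y0.cast_nonneg
    have hy1 : (0 : ℝ) ≤ y1 := y1.cast_nonneg
    rw [h, mul_zero, eq_comm]
    interval_cases o <;> simp only [qSingle_zero, qSingle_one, div_eq_zero_iff] at h ⊢ <;> left
    · rcases h with h | h <;> nlinarith
    · have : (y1 : ℝ) = 0 := by
        rcases h with h | h
        · exact (mul_eq_zero.mp h).resolve_right hθ0.ne'
        · nlinarith
      simp [this]
  · exact div_mul_cancel₀ _ h

lemma abs_qRatio_le (hθ0 : 0 < θ0) (hθ1 : 0 < θ1) (ho : o ≤ 1) :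
    |qRatio θ0 θ1 y0 y1 o| ≤ 1 + θ1 / θ0 + θ0 / θ1 := by
  rw [abs_of_nonneg (qRatio_nonneg hθ0.le hθ1.le)]
  have hy0 : (0 : ℝ) ≤ y0 := y0.cast_nonneg
  have hy1 : (0 : ℝ) ≤ y1 := y1.cast_nonneg
  have hK : 0 ≤ 1 + θ1 / θ0 + θ0 / θ1 := by positivity
  have h_odds : ((y0 : ℝ) + y1 * θ0) / (y0 + y1 * θ1) ≤ 1 + θ0 / θ1 := by
    refine div_le_of_le_mul₀ (by positivity) (by positivity) ?_
    have : θ0 / θ1 * (y1 * θ1) = y1 * θ0 := by field_simp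
    nlinarith [div_nonneg hθ0.le hθ1.le]
  interval_cases o <;> unfold qRatio <;> simp only [qSingle_zero, qSingle_one]
  · rcases Nat.eq_zero_or_pos y0 with h | h
    · simp [h, hK]
    calc _ = ((y0 : ℝ) + y1 * θ0) / (y0 + y1 * θ1) :=
          div_div_div_cancel_left' _ _ (by positivity)
      _ ≤ _ := h_odds.trans (by linarith [div_nonneg hθ1.le hθ0.le])
  · rcases Nat.eq_zero_or_pos y1 with h | h
    · simp [h, hK]
    calc _ = θ1 / θ0 * (((y0 : ℝ) + y1 * θ0) / (y0 + y1 * θ1)) := by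
          field_simp
      _ ≤ θ1 / θ0 * (1 + θ0 / θ1) := by gcongr
      _ = 1 + θ1 / θ0 := by field_simp; ring
      _ ≤ _ := by linarith [div_nonneg hθ0.le hθ1.le]

lemma qRatio_eq_of_le_one (ho : o ≤ 1) :
    qRatio θ0 θ1 y0 y1 o = qRatio θ0 θ1 y0 y1 1 * o + qRatio θ0 θ1 y0 y1 0 * (1 - o) := by
  interval_cases o <;> simp

lemma qRatio_one_mul_add_qRatio_zero_mul (hθ0 : 0 < θ0) (hθ1 : 0 < θ1) (hy : 1 ≤ y0 + y1) :
    qRatio θ0 θ1 y0 y1 1 * qSingle θ0 y0 y1 1 +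
      qRatio θ0 θ1 y0 y1 0 * (1 - qSingle θ0 y0 y1 1) = 1 := by
  have h_compl : 1 - qSingle θ0 y0 y1 1 = qSingle θ0 y0 y1 0 := by
    linarith [qSingle_zero_add_qSingle_one hθ0 hy]
  rw [h_compl, qRatio_mul_qSingle hθ0 le_rfl, qRatio_mul_qSingle hθ0 zero_le_one, add_comm,
    qSingle_zero_add_qSingle_one hθ1 hy]

end Algebra

lemma measurable_qRatio_comp {Ω : Type*} {m : MeasurableSpace Ω} {θ0 θ1 : ℝ}
    {y0 y1 o : Ω → ℕ}
    (hy0 : Measurable[m] y0) (hy1 : Measurable[m] y1) (ho : Measurable[m] o) :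
    Measurable[m] fun ω => qRatio θ0 θ1 (y0 ω) (y1 ω) (o ω) :=
  (measurable_of_countable fun p : ℕ × ℕ × ℕ => qRatio θ0 θ1 p.1 p.2.1 p.2.2).comp
    (f := fun ω => (y0 ω, y1 ω, o ω)) (hy0.prodMk (hy1.prodMk ho))

-- Truncated subtraction can only slow the depletion, so this needs no almost-sure argument.
lemma riskSet_add_pos {y0 y1 o : ℕ → ℕ} (ho : ∀ i, o i ≤ 1)
    (hupd1 : ∀ i, 1 ≤ i → y1 (i + 1) = y1 i - o i)
    (hupd0 : ∀ i, 1 ≤ i → y0 (i + 1) = y0 i - (1 - o i)) {k : ℕ} (hk : k < y0 1 + y1 1) :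
    0 < y0 (k + 1) + y1 (k + 1) := by
  suffices h : ∀ i, y0 1 + y1 1 ≤ y0 (i + 1) + y1 (i + 1) + i by linarith [h k]
  intro i
  induction i with
  | zero => simp
  | succ i ih =>
    have := ho (i + 1)
    rw [hupd1 (i + 1) (by omega), hupd0 (i + 1) (by omega)]
    omega

section Probability

variable {Ω : Type*} {m mΩ : MeasurableSpace Ω} {μ : Measure Ω} [IsFiniteMeasure μ]

lemma condExp_mul_add_mul_one_sub (hm : m ≤ mΩ) {a b X p : Ω → ℝ} {C : ℝ}
    (ha : StronglyMeasurable[m] a) (hb : StronglyMeasurable[m] b)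
    (ha_bdd : ∀ ω, |a ω| ≤ C) (hb_bdd : ∀ ω, |b ω| ≤ C) (hX : Integrable X μ)
    (hXp : μ[X | m] =ᵐ[μ] p) :
    μ[a * X + b * (1 - X) | m] =ᵐ[μ] a * p + b * (1 - p) := by
  have h1 : Integrable (1 : Ω → ℝ) μ := integrable_const 1
  have h1X : Integrable (1 - X) μ := h1.sub hX
  have haX : Integrable (a * X) μ :=
    hX.bdd_mul (ha.mono hm).aestronglyMeasurable (ae_of_all _ ha_bdd)
  have hb1X : Integrable (b * (1 - X)) μ :=
    h1X.bdd_mul (hb.mono hm).aestronglyMeasurable (ae_of_all _ hb_bdd)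
  filter_upwards [condExp_add haX hb1X m, condExp_mul_of_stronglyMeasurable_left ha haX hX,
    condExp_mul_of_stronglyMeasurable_left hb hb1X h1X, condExp_sub h1 hX m,
    hXp] with ω h_add h_a h_b h_sub hω
  have h_one : μ[(1 : Ω → ℝ) | m] = 1 := condExp_const hm 1
  simp [h_add, h_a, h_b, h_sub, hω, h_one]

lemma condExp_qRatio_eq_one (hm : m ≤ mΩ) {θ0 θ1 : ℝ} (hθ0 : 0 < θ0) (hθ1 : 0 < θ1)
    {y0 y1 o : Ω → ℕ} (hy0 : Measurable[m] y0) (hy1 : Measurable[m] y1) (ho : Measurable o)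
    (ho_le : ∀ ω, o ω ≤ 1) (hy : ∀ ω, 1 ≤ y0 ω + y1 ω)
    (hbern : μ[fun ω => (o ω : ℝ) | m]
      =ᵐ[μ] fun ω => (y1 ω : ℝ) * θ0 / ((y0 ω : ℝ) + (y1 ω : ℝ) * θ0)) :
    μ[fun ω => qRatio θ0 θ1 (y0 ω) (y1 ω) (o ω) | m] =ᵐ[μ] 1 := by
  set r : ℕ → Ω → ℝ := fun k ω => qRatio θ0 θ1 (y0 ω) (y1 ω) k
  have hr : ∀ k, StronglyMeasurable[m] (r k) := fun k =>
    (measurable_qRatio_comp hy0 hy1 measurable_const).stronglyMeasurable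
  have hr_bdd : ∀ k ≤ 1, ∀ ω, |r k ω| ≤ 1 + θ1 / θ0 + θ0 / θ1 := fun k hk _ =>
    abs_qRatio_le hθ0 hθ1 hk
  have hX : Integrable (fun ω => (o ω : ℝ)) μ :=
    .of_bound ((measurable_of_countable _).comp ho).aestronglyMeasurable 1
      (ae_of_all _ fun ω => by simpa using ho_le ω)
  have hsplit : (fun ω => qRatio θ0 θ1 (y0 ω) (y1 ω) (o ω))
      = r 1 * (fun ω => (o ω : ℝ)) + r 0 * (1 - fun ω => (o ω : ℝ)) :=
    funext fun ω => qRatio_eq_of_le_one (ho_le ω)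
  rw [hsplit]
  refine (condExp_mul_add_mul_one_sub hm (hr 1) (hr 0) (hr_bdd 1 le_rfl) (hr_bdd 0 zero_le_one)
    hX hbern).trans (ae_of_all _ fun ω => ?_)
  simpa [r] using qRatio_one_mul_add_qRatio_zero_mul hθ0 hθ1 (hy ω)

variable {ℱ : Filtration ℕ mΩ}

lemma martingale_prod_Icc_min {R : ℕ → Ω → ℝ} {C : ℝ} (N : ℕ)
    (hR : ∀ i, 1 ≤ i → StronglyMeasurable[ℱ i] (R i)) (hR_bdd : ∀ i ω, |R i ω| ≤ C)
    (hR_condExp : ∀ k < N, μ[R (k + 1) | ℱ k] =ᵐ[μ] 1) :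
    Martingale (fun n ω => ∏ i ∈ Icc 1 (min n N), R i ω) ℱ μ := by
  set M : ℕ → Ω → ℝ := fun n ω => ∏ i ∈ Icc 1 n, R i ω
  have hM : ∀ n, StronglyMeasurable[ℱ n] (M n) := fun n =>
    Finset.stronglyMeasurable_fun_prod _ fun i hi =>
      (hR i (mem_Icc.mp hi).1).mono (ℱ.mono (mem_Icc.mp hi).2)
  have hM_int : ∀ n, Integrable (M n) μ := fun n =>
    .of_bound ((hM n).mono (ℱ.le n)).aestronglyMeasurable (C ^ #(Icc 1 n))
      (ae_of_all _ fun ω => by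
        simp only [M, norm_prod, Real.norm_eq_abs]
        exact (prod_le_prod (fun _ _ => abs_nonneg _) fun i _ => hR_bdd i ω).trans_eq
          (prod_const C))
  refine martingale_nat (fun n => (hM _).mono (ℱ.mono (min_le_left n N)))
    (fun n => hM_int _) fun k => ?_
  rcases lt_or_ge k N with hk | hk
  · rw [min_eq_left hk.le, min_eq_left hk]
    have hsplit : M (k + 1) = M k * R (k + 1) :=
      funext fun ω => prod_Icc_succ_top (by omega) _
    have hR_int : Integrable (R (k + 1)) μ :=
      .of_bound ((hR _ (by omega)).mono (ℱ.le _)).aestronglyMeasurable C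
        (ae_of_all _ (hR_bdd _))
    change M k =ᵐ[μ] μ[M (k + 1) | ℱ k]
    rw [hsplit]
    filter_upwards [condExp_mul_of_stronglyMeasurable_left (hM k) (hsplit ▸ hM_int (k + 1))
      hR_int, hR_condExp k hk] with ω h_pull h_one
    simp [h_pull, h_one]
  · rw [min_eq_right hk, min_eq_right (by omega)]
    exact (condExp_of_stronglyMeasurable (ℱ.le k) ((hM N).mono (ℱ.mono hk))
      (hM_int N)).symm.eventuallyEq

lemma MeasureTheory.Submartingale.measure_exists_ge_le_integral_div {f : ℕ → Ω → ℝ}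
    (hf : Submartingale f ℱ μ) (hf_nonneg : 0 ≤ f) {ε : ℝ} (hε : 0 < ε) (N : ℕ) :
    μ {ω | ∃ n ≤ N, ε ≤ f n ω} ≤ ENNReal.ofReal ((∫ ω, f N ω ∂μ) / ε) := by
  set S := {ω | (ε.toNNReal : ℝ) ≤
    (range (N + 1)).sup' nonempty_range_add_one fun k => f k ω}
  have hS : {ω | ∃ n ≤ N, ε ≤ f n ω} = S := by
    ext ω
    simp [S, le_sup'_iff, hε.le]
  have h_int : ∫ ω in S, f N ω ∂μ ≤ ∫ ω, f N ω ∂μ :=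
    setIntegral_le_integral (hf.integrable N) (ae_of_all _ (hf_nonneg N))
  rw [hS, ENNReal.ofReal_div_of_pos hε, ENNReal.le_div_iff_mul_le
    (Or.inl (ENNReal.ofReal_pos.mpr hε).ne') (Or.inl ENNReal.ofReal_ne_top), mul_comm]
  exact (maximal_ineq hf hf_nonneg N).trans (ENNReal.ofReal_le_ofReal h_int)

end Probability

theorem safe_logrank_martingale_and_ville_general
    {Ω : Type*} {mΩ : MeasurableSpace Ω} (μ : Measure Ω) [IsProbabilityMeasure μ]
    (ℱ : Filtration ℕ mΩ)
    (θ0 θ1 : ℝ) (hθ0 : 0 < θ0) (hθ1 : 0 < θ1)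
    (m0 m1 : ℕ)
    (O1 Y0 Y1 : ℕ → Ω → ℕ)
    (hO1bin : ∀ i ω, O1 i ω ≤ 1)
    (hY1init : ∀ ω, Y1 1 ω = m1) (hY0init : ∀ ω, Y0 1 ω = m0)
    (hY1upd : ∀ i ω, 1 ≤ i → Y1 (i + 1) ω = Y1 i ω - O1 i ω)
    (hY0upd : ∀ i ω, 1 ≤ i → Y0 (i + 1) ω = Y0 i ω - (1 - O1 i ω))
    (hO1adapted : ∀ i, Measurable[ℱ i] (O1 i))
    (hY1pred : ∀ i, 1 ≤ i → Measurable[ℱ (i - 1)] (Y1 i))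
    (hY0pred : ∀ i, 1 ≤ i → Measurable[ℱ (i - 1)] (Y0 i))
    (hbern : ∀ i, 1 ≤ i → i ≤ m0 + m1 →
      μ[fun ω => (O1 i ω : ℝ) | ℱ (i - 1)]
        =ᵐ[μ] fun ω => (Y1 i ω : ℝ) * θ0 / ((Y0 i ω : ℝ) + (Y1 i ω : ℝ) * θ0)) :
    (∀ n ω, 0 ≤ logrankLR θ0 θ1 O1 Y0 Y1 n ω) ∧
    (∀ n, 1 ≤ n → n ≤ m0 + m1 →
      (μ[logrankLR θ0 θ1 O1 Y0 Y1 n | ℱ (n - 1)]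
          =ᵐ[μ] logrankLR θ0 θ1 O1 Y0 Y1 (n - 1)) ∧
      ∫ ω, logrankLR θ0 θ1 O1 Y0 Y1 n ω ∂μ = 1) ∧
    ∀ α : ℝ, 0 < α → α ≤ 1 →
      μ {ω | ∃ n, 1 ≤ n ∧ n ≤ m0 + m1 ∧ 1 / α ≤ logrankLR θ0 θ1 O1 Y0 Y1 n ω}
        ≤ ENNReal.ofReal α := by
  set N := m0 + m1
  set R : ℕ → Ω → ℝ := fun i ω => qRatio θ0 θ1 (Y0 i ω) (Y1 i ω) (O1 i ω)
  set f : ℕ → Ω → ℝ := fun n ω => ∏ i ∈ Icc 1 (min n N), R i ω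
  have hprod_nonneg : ∀ n ω, 0 ≤ ∏ i ∈ Icc 1 n, R i ω := fun _ _ =>
    prod_nonneg fun _ _ => qRatio_nonneg hθ0.le hθ1.le
  have hR_meas : ∀ i, 1 ≤ i → StronglyMeasurable[ℱ i] (R i) := fun i hi =>
    (measurable_qRatio_comp ((hY0pred i hi).mono (ℱ.mono (i.sub_le 1)) le_rfl)
      ((hY1pred i hi).mono (ℱ.mono (i.sub_le 1)) le_rfl) (hO1adapted i)).stronglyMeasurable
  have hR_bdd : ∀ i ω, |R i ω| ≤ 1 + θ1 / θ0 + θ0 / θ1 := fun i ω =>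
    abs_qRatio_le hθ0 hθ1 (hO1bin i ω)
  have hR_condExp : ∀ k < N, μ[R (k + 1) | ℱ k] =ᵐ[μ] 1 := fun k hk =>
    condExp_qRatio_eq_one (ℱ.le k) hθ0 hθ1 (hY0pred (k + 1) (by omega))
      (hY1pred (k + 1) (by omega)) ((hO1adapted _).mono (ℱ.le _) le_rfl) (hO1bin _)
      (fun ω => riskSet_add_pos (y0 := (Y0 · ω)) (y1 := (Y1 · ω)) (hO1bin · ω) (hY1upd · ω)
        (hY0upd · ω) (by rw [hY0init, hY1init]; exact hk))
      (hbern (k + 1) (by omega) hk)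
  have hf : Martingale f ℱ μ := martingale_prod_Icc_min N hR_meas hR_bdd hR_condExp
  have hf_eq : ∀ n ≤ N, logrankLR θ0 θ1 O1 Y0 Y1 n = f n := fun n hn => by
    simp only [f, min_eq_left hn]
    rfl
  have hf_integral : ∀ n, ∫ ω, f n ω ∂μ = 1 := fun n => by
    rw [← integral_condExp (ℱ.le 0), integral_congr_ae (hf.condExp_ae_eq n.zero_le)]
    simp [f]
  refine ⟨hprod_nonneg, fun n hn1 hn => ?_, fun α hα _ => ?_⟩
  · rw [hf_eq n hn, hf_eq (n - 1) (by omega)]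
    exact ⟨hf.condExp_ae_eq (n.sub_le 1), hf_integral n⟩
  · calc μ {ω | ∃ n, 1 ≤ n ∧ n ≤ N ∧ 1 / α ≤ logrankLR θ0 θ1 O1 Y0 Y1 n ω}
        ≤ μ {ω | ∃ n ≤ N, 1 / α ≤ f n ω} := measure_mono fun ω ⟨n, _, hn, hω⟩ =>
          ⟨n, hn, hf_eq n hn ▸ hω⟩
      _ ≤ ENNReal.ofReal ((∫ ω, f N ω ∂μ) / (1 / α)) :=
          hf.submartingale.measure_exists_ge_le_integral_div
            (fun n ω => hprod_nonneg _ ω) (by positivity) N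
      _ = ENNReal.ofReal α := by rw [hf_integral, one_div_one_div]

/-- The discrete-time risk set process of the safe logrank test: initial risk sets
`Y1⟨1⟩ = m1 ≥ 1`, `Y0⟨1⟩ = m0 ≥ 1`; at each event time `i`, conditionally on the past, the
treatment-group event indicator `O1⟨i⟩` is Bernoulli(`Y1⟨i⟩·θ0/(Y0⟨i⟩ + Y1⟨i⟩·θ0)`) (stated
via its conditional expectation), and the risk sets update by removing the participant who
had the event.  Then for every `θ1 > 0` the logrank likelihood-ratio process
`M_{θ1,θ0}⟨n⟩` is a nonnegative martingale under the null `P_{θ0}` with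
`E[M_{θ1,θ0}⟨n⟩] = 1` for every `n` for which the risk set remains nonempty
(`n ≤ m0 + m1`), and consequently Ville's inequality holds: for every `0 < α ≤ 1`,
`P_{θ0}(∃ n, M_{θ1,θ0}⟨n⟩ ≥ 1/α) ≤ α`. -/
theorem safe_logrank_martingale_and_ville
    {Ω : Type*} {mΩ : MeasurableSpace Ω} (μ : Measure Ω) [IsProbabilityMeasure μ]
    (ℱ : Filtration ℕ mΩ)
    (θ0 θ1 : ℝ) (hθ0 : 0 < θ0) (hθ1 : 0 < θ1)
    (m0 m1 : ℕ) (hm0 : 1 ≤ m0) (hm1 : 1 ≤ m1)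
    (O1 Y0 Y1 : ℕ → Ω → ℕ)
    (hO1bin : ∀ i ω, O1 i ω ≤ 1)
    (hY1init : ∀ ω, Y1 1 ω = m1) (hY0init : ∀ ω, Y0 1 ω = m0)
    (hY1upd : ∀ i ω, 1 ≤ i → Y1 (i + 1) ω = Y1 i ω - O1 i ω)
    (hY0upd : ∀ i ω, 1 ≤ i → Y0 (i + 1) ω = Y0 i ω - (1 - O1 i ω))
    (hO1adapted : ∀ i, Measurable[ℱ i] (O1 i))
    (hY1pred : ∀ i, 1 ≤ i → Measurable[ℱ (i - 1)] (Y1 i))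
    (hY0pred : ∀ i, 1 ≤ i → Measurable[ℱ (i - 1)] (Y0 i))
    (hbern : ∀ i, 1 ≤ i → i ≤ m0 + m1 →
      μ[fun ω => (O1 i ω : ℝ) | ℱ (i - 1)]
        =ᵐ[μ] fun ω => (Y1 i ω : ℝ) * θ0 / ((Y0 i ω : ℝ) + (Y1 i ω : ℝ) * θ0)) :
    (∀ n ω, 0 ≤ logrankLR θ0 θ1 O1 Y0 Y1 n ω) ∧
    (∀ n, 1 ≤ n → n ≤ m0 + m1 →
      (μ[logrankLR θ0 θ1 O1 Y0 Y1 n | ℱ (n - 1)]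
          =ᵐ[μ] logrankLR θ0 θ1 O1 Y0 Y1 (n - 1)) ∧
      ∫ ω, logrankLR θ0 θ1 O1 Y0 Y1 n ω ∂μ = 1) ∧
    ∀ α : ℝ, 0 < α → α ≤ 1 →
      μ {ω | ∃ n, 1 ≤ n ∧ n ≤ m0 + m1 ∧ 1 / α ≤ logrankLR θ0 θ1 O1 Y0 Y1 n ω}
        ≤ ENNReal.ofReal α :=
  safe_logrank_martingale_and_ville_general μ ℱ θ0 θ1 hθ0 hθ1 m0 m1 O1 Y0 Y1 hO1bin hY1init hY0init
    hY1upd hY0upd hO1adapted hY1pred hY0pred hbern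
end
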